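/- For r ≥ 2 and n ≥ r(r+2) with rn even, there exists an r-regular graph G on n vertices with q*(G) ≥ 1 − (r+2)/n. -/

import Mathlib

open Finset
open scoped Classical

variable {V : Type*} [Fintype V] [DecidableEq V]

/-- Number of edges of `G` inside vertex set `A` (as a real number). -/
noncomputable def eIn (G : SimpleGraph V) (A : Finset V) : ℝ :=
  (1/2) * ∑ u ∈ A, ∑ v ∈ A, if G.Adj u v then (1:ℝ) else 0

/-- Total number of edges of `G` (as a real number). -/
noncomputable def numEdges (G : SimpleGraph V) : ℝ := eIn G (univ : Finset V)

/-- Degree of vertex `v` in `G` (as a real number). -/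
noncomputable def degR (G : SimpleGraph V) (v : V) : ℝ :=
  ∑ u : V, if G.Adj v u then (1:ℝ) else 0

/-- Volume of vertex set `A`: sum of degrees of its vertices. -/
noncomputable def vol (G : SimpleGraph V) (A : Finset V) : ℝ := ∑ v ∈ A, degR G v

/-- Number of edges of `G` between `A` and its complement (as a real number). -/
noncomputable def eCross (G : SimpleGraph V) (A : Finset V) : ℝ :=
  ∑ u ∈ A, ∑ v ∈ (univ : Finset V) \ A, if G.Adj u v then (1:ℝ) else 0

/-- The modularity score of a vertex partition `P` of `G`. -/
noncomputable def modScore (G : SimpleGraph V) (P : Finpartition (univ : Finset V)) : ℝ :=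
  (∑ A ∈ P.parts, eIn G A) / numEdges G
    - (∑ A ∈ P.parts, (vol G A)^2) / (4 * (numEdges G)^2)

/-- The modularity of `G`: the supremum of modularity scores over all vertex partitions. -/
noncomputable def modularity (G : SimpleGraph V) : ℝ :=
  sSup { q : ℝ | ∃ P : Finpartition (univ : Finset V), q = modScore G P }

/-!
Take a disjoint union of `r`-regular blocks: copies of `K_{r+1}` together with a few copies of
`K_{r+2}` minus a perfect matching (`r` even) or of `K_{r+3}` minus a Hamilton cycle (`r` odd).
For the partition into blocks no edge is cut, and a part with `s` vertices has volume `r s`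
while `m = r n / 2`, so the partition scores `1 - ∑ s² / n²`. Every block has at most `r + 2`
vertices, or in the odd case the blocks of size `r + 3` are outweighed by those of size
`r + 1`, hence `∑ s² ≤ (r + 2) n`. The numbers of blocks come from dividing `n` by `r + 1`:
the remainder is at most `r ≤ n / (r + 1)`, and it is even when `r` is odd.
-/

theorem Finpartition.sum_parts_sum_eq_sum_part {α M : Type*} [Fintype α] [DecidableEq α]
    [AddCommMonoid M] (P : Finpartition (univ : Finset α)) (f : Finset α → α → M) :
    ∑ A ∈ P.parts, ∑ a ∈ A, f A a = ∑ a, f (P.part a) a :=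
  calc ∑ A ∈ P.parts, ∑ a ∈ A, f A a = ∑ A ∈ P.parts, ∑ a ∈ A, f (P.part a) a :=
        sum_congr rfl fun A hA => sum_congr rfl fun a ha => by rw [P.part_eq_of_mem hA ha]
    _ = ∑ a ∈ P.parts.biUnion id, f (P.part a) a :=
        (sum_biUnion P.supIndep.pairwiseDisjoint).symm
    _ = ∑ a, f (P.part a) a := sum_congr P.biUnion_parts fun _ _ => rfl

theorem modScore_le_modularity (G : SimpleGraph V) (P : Finpartition (univ : Finset V)) :
    modScore G P ≤ modularity G := by
  refine le_csSup (Set.Finite.bddAbove ?_) ⟨P, rfl⟩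
  exact (Set.finite_range (modScore G)).subset (by rintro _ ⟨Q, rfl⟩; exact ⟨Q, rfl⟩)

theorem sum_eIn_parts (G : SimpleGraph V) (P : Finpartition (univ : Finset V)) :
    ∑ A ∈ P.parts, eIn G A =
      (1/2) * ∑ u, ∑ v ∈ P.part u, if G.Adj u v then (1:ℝ) else 0 := by
  simp only [eIn, ← mul_sum]
  rw [P.sum_parts_sum_eq_sum_part (fun A u => ∑ v ∈ A, if G.Adj u v then (1:ℝ) else 0)]

theorem sum_eIn_parts_eq_numEdges {G : SimpleGraph V} {P : Finpartition (univ : Finset V)}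
    (hP : ∀ u v, G.Adj u v → v ∈ P.part u) : ∑ A ∈ P.parts, eIn G A = numEdges G := by
  rw [sum_eIn_parts, numEdges, eIn]
  congr 1
  refine sum_congr rfl fun u _ => sum_subset (subset_univ _) fun v _ hv => ?_
  exact if_neg fun h => hv (hP u v h)

section Regular

variable {α : Type*} [Fintype α]

theorem degR_eq_degree (G : SimpleGraph α) (v : α) : degR G v = G.degree v := by
  rw [degR, sum_boole, ← SimpleGraph.card_neighborFinset_eq_degree,
    SimpleGraph.neighborFinset_eq_filter]

theorem vol_eq_of_isRegularOfDegree {G : SimpleGraph α} {r : ℕ} (hG : G.IsRegularOfDegree r)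
    (A : Finset α) : vol G A = r * #A := by
  simp [vol, degR_eq_degree, hG.degree_eq, mul_comm]

theorem numEdges_eq_of_isRegularOfDegree {G : SimpleGraph α} {r : ℕ}
    (hG : G.IsRegularOfDegree r) : numEdges G = Fintype.card α * r / 2 := by
  have hvol := vol_eq_of_isRegularOfDegree hG univ
  simp only [vol, degR, card_univ] at hvol
  rw [numEdges, eIn, hvol]
  ring

end Regular

theorem sum_vol_sq_parts_of_isRegularOfDegree {G : SimpleGraph V} {r : ℕ}
    (hG : G.IsRegularOfDegree r) (P : Finpartition (univ : Finset V)) :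
    ∑ A ∈ P.parts, vol G A ^ 2 = r ^ 2 * ∑ u, (#(P.part u) : ℝ) := by
  simp_rw [vol_eq_of_isRegularOfDegree hG, mul_pow, ← mul_sum, sq (#_ : ℝ)]
  congr 1
  simpa using P.sum_parts_sum_eq_sum_part (fun A _ => (#A : ℝ))

theorem modScore_eq_of_isRegularOfDegree [Nonempty V] {G : SimpleGraph V} {r : ℕ}
    (hG : G.IsRegularOfDegree r) (hr : r ≠ 0) {P : Finpartition (univ : Finset V)}
    (hP : ∀ u v, G.Adj u v → v ∈ P.part u) :
    modScore G P = 1 - (∑ u, (#(P.part u) : ℝ)) / Fintype.card V ^ 2 := by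
  have hm : numEdges G ≠ 0 := by
    rw [numEdges_eq_of_isRegularOfDegree hG]
    positivity
  rw [modScore, sum_eIn_parts_eq_numEdges hP, div_self hm,
    sum_vol_sq_parts_of_isRegularOfDegree hG, numEdges_eq_of_isRegularOfDegree hG]
  field_simp
  ring

theorem one_sub_le_modularity_of_isRegularOfDegree [Nonempty V] {G : SimpleGraph V} {r : ℕ}
    (hG : G.IsRegularOfDegree r) (hr : r ≠ 0) {ι : Type*} (f : V → ι)
    (hf : ∀ u v, G.Adj u v → f u = f v) :
    1 - (∑ u, (#{v | f u = f v} : ℝ)) / Fintype.card V ^ 2 ≤ modularity G := by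
  let P := Finpartition.ofSetoid (Setoid.ker f)
  have hpart : ∀ u, P.part u = ({v | f u = f v} : Finset V) := fun u => by
    ext v
    simp [P, Finpartition.mem_part_ofSetoid_iff_rel, Setoid.ker_def]
  have hscore := modScore_eq_of_isRegularOfDegree hG hr (P := P) fun u v h => by
    rw [hpart]
    simp [hf u v h]
  simp only [hpart] at hscore
  exact hscore ▸ modScore_le_modularity G P

namespace SimpleGraph

variable {α β : Type*} {G : SimpleGraph α} {H : SimpleGraph β} {d : ℕ}

theorem IsRegularOfDegree.of_iso [G.LocallyFinite] [H.LocallyFinite] (f : G ≃g H)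
    (hG : G.IsRegularOfDegree d) : H.IsRegularOfDegree d := fun v => by
  rw [← f.apply_symm_apply v, f.degree_eq]
  exact hG _

theorem IsRegularOfDegree.boxProd [G.LocallyFinite] [H.LocallyFinite] {e : ℕ}
    (hG : G.IsRegularOfDegree d) (hH : H.IsRegularOfDegree e) :
    (G □ H).IsRegularOfDegree (d + e) := fun x => by
  rw [degree_boxProd, hG.degree_eq, hH.degree_eq]

theorem IsRegularOfDegree.sum [DecidableEq α] [DecidableEq β] [G.LocallyFinite]
    [H.LocallyFinite] (hG : G.IsRegularOfDegree d) (hH : H.IsRegularOfDegree d) :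
    (G ⊕g H).IsRegularOfDegree d := by
  rintro (v | w)
  · rw [← card_neighborSet_eq_degree, ← hG v, ← card_neighborSet_eq_degree]
    exact Fintype.card_congr <| (Equiv.setCongr (neighborSet_sum_inl v)).trans
      (Equiv.Set.image _ _ Sum.inl_injective).symm
  · rw [← card_neighborSet_eq_degree, ← hH w, ← card_neighborSet_eq_degree]
    exact Fintype.card_congr <| (Equiv.setCongr (neighborSet_sum_inr w)).trans
      (Equiv.Set.image _ _ Sum.inr_injective).symm

theorem isRegularOfDegree_compl_cycleGraph (r : ℕ) :
    (cycleGraph (r + 3))ᶜ.IsRegularOfDegree r := by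
  have hcycle : (cycleGraph (r + 3)).IsRegularOfDegree 2 := fun _ => cycleGraph_degree_three_le
  simpa using hcycle.compl

-- `⊥ □ ⊤` on `Fin (s + 1) × Fin 2` is a perfect matching.
theorem isRegularOfDegree_compl_boxProd_bot_top (s : ℕ) :
    ((⊥ : SimpleGraph (Fin (s + 1))) □ (⊤ : SimpleGraph (Fin 2)))ᶜ.IsRegularOfDegree
      (2 * s) := by
  intro v
  rw [degree_compl, degree_boxProd]
  simp
  omega

end SimpleGraph

open SimpleGraph in
theorem exists_isRegularOfDegree_one_sub_le_modularity {α β : Type*} [Fintype α] [Fintype β]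
    {Gα : SimpleGraph α} {Gβ : SimpleGraph β} [Gα.LocallyFinite] [Gβ.LocallyFinite] {r : ℕ}
    (hα : Gα.IsRegularOfDegree r) (hβ : Gβ.IsRegularOfDegree r) (hr : r ≠ 0) {b a n : ℕ}
    (hn : b * Fintype.card α + a * Fintype.card β = n) (hn0 : n ≠ 0) :
    ∃ G : SimpleGraph (Fin n), G.IsRegularOfDegree r ∧
      1 - (b * Fintype.card α ^ 2 + a * Fintype.card β ^ 2 : ℝ) / n ^ 2 ≤ modularity G := by
  let H := ((⊥ : SimpleGraph (Fin b)) □ Gα) ⊕g ((⊥ : SimpleGraph (Fin a)) □ Gβ)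
  have hH : H.IsRegularOfDegree r := by
    simpa using (IsRegularOfDegree.bot.boxProd hα).sum (IsRegularOfDegree.bot.boxProd hβ)
  let e : Fin n ≃ (Fin b × α) ⊕ (Fin a × β) :=
    (Fintype.equivFinOfCardEq (by simpa using hn)).symm
  have hG : (H.comap e).IsRegularOfDegree r := hH.of_iso (Iso.comap e H).symm
  let block : (Fin b × α) ⊕ (Fin a × β) → Fin b ⊕ Fin a := Sum.map Prod.fst Prod.fst
  have hblock : ∀ u v, H.Adj u v → block u = block v := by
    rintro (⟨x, i⟩ | ⟨x, i⟩) (⟨y, j⟩ | ⟨y, j⟩) h <;>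
      simp_all [H, block, boxProd_adj]
  have hcount : ∑ x : Fin n, (#{y | block (e x) = block (e y)} : ℝ)
      = b * Fintype.card α ^ 2 + a * Fintype.card β ^ 2 := by
    have hfibre : ∀ w, #{y | block w = block (e y)} = #{w' | block w = block w'} :=
      fun w => card_equiv e (by simp)
    rw [e.sum_comp (fun w => (#{y | block w = block (e y)} : ℝ))]
    simp only [hfibre, card_filter, Fintype.sum_sum_type, Fintype.sum_prod_type]
    simp [block]
    ring
  have : Nonempty (Fin n) := ⟨⟨0, Nat.pos_of_ne_zero hn0⟩⟩
  refine ⟨H.comap e, hG, ?_⟩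
  simpa [hcount] using one_sub_le_modularity_of_isRegularOfDegree hG hr (block ∘ e)
    fun u v h => hblock _ _ h

theorem exists_isRegularOfDegree_le_modularity_of_sum_sq_le {α β : Type*}
    [Fintype α] [Fintype β] {Gα : SimpleGraph α} {Gβ : SimpleGraph β}
    [Gα.LocallyFinite] [Gβ.LocallyFinite] {r : ℕ} (hα : Gα.IsRegularOfDegree r)
    (hβ : Gβ.IsRegularOfDegree r) (hr : r ≠ 0)
    {b a n : ℕ} (hn : b * Fintype.card α + a * Fintype.card β = n) (hn0 : n ≠ 0)
    (hsq : b * Fintype.card α ^ 2 + a * Fintype.card β ^ 2 ≤ (r + 2) * n) :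
    ∃ G : SimpleGraph (Fin n), G.IsRegularOfDegree r ∧
      1 - ((r : ℝ) + 2) / n ≤ modularity G := by
  obtain ⟨G, hG, hmod⟩ := exists_isRegularOfDegree_one_sub_le_modularity hα hβ hr hn hn0
  refine ⟨G, hG, le_trans ?_ hmod⟩
  have hn_pos : (0 : ℝ) < n := by positivity
  have hsq' : (b * Fintype.card α ^ 2 + a * Fintype.card β ^ 2 : ℝ) ≤ (r + 2) * n := by
    exact_mod_cast hsq
  rw [sub_le_sub_iff_left, div_le_div_iff₀ (by positivity) hn_pos]
  nlinarith

theorem exists_mul_add_mul_eq {r n : ℕ} (hn : r * (r + 1) ≤ n) :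
    ∃ b a, b * (r + 2) + a * (r + 1) = n := by
  have hq : r ≤ n / (r + 1) := (Nat.le_div_iff_mul_le (by omega)).2 hn
  have hc : n % (r + 1) < r + 1 := Nat.mod_lt _ (by omega)
  refine ⟨n % (r + 1), n / (r + 1) - n % (r + 1), ?_⟩
  have hdm := Nat.div_add_mod n (r + 1)
  zify [show n % (r + 1) ≤ n / (r + 1) by omega] at hdm ⊢
  linear_combination hdm

theorem exists_mul_add_mul_eq_of_odd {r n : ℕ} (hr : Odd r) (hn : r * (r + 1) ≤ n)
    (heven : Even n) :
    ∃ b a, b * (r + 3) + a * (r + 1) = n ∧ b * (r + 3) ≤ a * (r + 1) := by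
  obtain ⟨s, rfl⟩ := hr
  obtain ⟨m, rfl⟩ := heven
  have hq : 2 * s + 1 ≤ m / (s + 1) := (Nat.le_div_iff_mul_le (by omega)).2 (by nlinarith)
  have hc : m % (s + 1) ≤ s := Nat.lt_succ_iff.mp (Nat.mod_lt _ (by omega))
  have hdm := Nat.div_add_mod m (s + 1)
  obtain ⟨a, ha⟩ : ∃ a, m / (s + 1) = m % (s + 1) + a :=
    ⟨_, (Nat.add_sub_of_le (by omega)).symm⟩
  refine ⟨m % (s + 1), a, ?_, ?_⟩
  · rw [ha] at hdm
    linear_combination 2 * hdm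
  · nlinarith

/-- for `r ≥ 2` and `n ≥ r(r+2)` with `rn` even, there is an `r`-regular
graph on `n` vertices with modularity at least `1-(r+2)/n`. -/
theorem exists_regular_high_modularity (r n : ℕ) (hr : 2 ≤ r)
    (hn : r * (r + 2) ≤ n) (hrn : Even (r * n)) :
    ∃ G : SimpleGraph (Fin n), G.IsRegularOfDegree r ∧
      1 - ((r : ℝ) + 2) / n ≤ modularity G := by
  have hn0 : n ≠ 0 := by nlinarith
  have hn' : r * (r + 1) ≤ n := le_trans (by nlinarith) hn
  have hK : (⊤ : SimpleGraph (Fin (r + 1))).IsRegularOfDegree r := by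
    simpa using SimpleGraph.IsRegularOfDegree.top (V := Fin (r + 1))
  obtain ⟨s, rfl | rfl⟩ := Nat.even_or_odd' r
  · obtain ⟨b, a, hba⟩ := exists_mul_add_mul_eq hn'
    refine exists_isRegularOfDegree_le_modularity_of_sum_sq_le
      (SimpleGraph.isRegularOfDegree_compl_boxProd_bot_top s) hK (by omega) (b := b) (a := a)
      (by simp only [Fintype.card_prod, Fintype.card_fin]; linear_combination hba) hn0 ?_
    simp only [Fintype.card_prod, Fintype.card_fin]
    nlinarith
  · have heven : Even n := (Nat.even_mul.mp hrn).resolve_left (by simp)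
    obtain ⟨b, a, hba, hle⟩ := exists_mul_add_mul_eq_of_odd (odd_two_mul_add_one s) hn' heven
    refine exists_isRegularOfDegree_le_modularity_of_sum_sq_le
      (SimpleGraph.isRegularOfDegree_compl_cycleGraph _) hK (by omega) (b := b) (a := a)
      (by simpa using hba) hn0 ?_
    simp only [Fintype.card_fin]
    nlinarith
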